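/- arXiv:2411.03983 — 3 statements merged into one kernel-verified Lean document; each statement's English description precedes it below -/
import Mathlib

section
/- Let N ≥ 5 and p > N/(N−4). Then the interval (4/(p−1), N−4) is nonempty; fix m with 4/(p−1) < m < N−4 and set M = m(m+2)(m−N+2)(m−N+4). Then M > 0, and for every ε > 0 the function v(x) = ε|x|^{−m} satisfies Δ²v(x) = ε M |x|^{−m−4} for every x ≠ 0. Moreover, if 0 < ε and ε^{p−1} < M, then the function f(x) := Δ²v(x) − v(x)^p = ε M |x|^{−m−4} − ε^p |x|^{−mp} is strictly positive for every |x| ≥ 1; in particular v is a positive stationary classical solution of Δ²v = |v|^p + f(x) on the open exterior {x ∈ ℝ^N : |x| > 1} with strictly positive forcing term f, and v = ε > 0 on the unit sphere. -/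
open MeasureTheory Real Set

noncomputable section

/-- `ℝ^N` -/
abbrev E (N : ℕ) : Type := EuclideanSpace ℝ (Fin N)

/-- The Laplacian: sum of second partial derivatives. -/
def lapl {N : ℕ} (f : E N → ℝ) (x : E N) : ℝ :=
  ∑ i : Fin N,
    fderiv ℝ (fun y => fderiv ℝ f y (EuclideanSpace.single i 1)) x (EuclideanSpace.single i 1)

/-- The biharmonic operator `Δ² = Δ ∘ Δ`. -/
def bilapl {N : ℕ} (f : E N → ℝ) : E N → ℝ := lapl (lapl f)

/-! The radial power `|x|^a` satisfies `Δ|x|^a = a(a + N - 2)|x|^(a-2)` away from the origin, so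
`Δ²(ε|x|^(-m)) = εM|x|^(-m-4)` with `M = m(m+2)(m-N+2)(m-N+4)`, which is positive for
`0 < m < N - 4`. On `|x| ≥ 1` the nonlinearity `ε^p|x|^(-mp)` is then dominated by
`εM|x|^(-m-4)`: the exponent comparison is `m(p-1) > 4`, i.e. `m > 4/(p-1)`, and the constant
comparison is `ε^(p-1) < M`. Supercriticality `p > N/(N-4)` is what makes `4/(p-1) < N-4`. -/

open scoped RealInnerProductSpace

section InnerProductSpace

variable {F : Type*} [NormedAddCommGroup F] [InnerProductSpace ℝ F]

theorem hasStrictFDerivAt_norm_rpow_of_ne_zero (a : ℝ) {x : F} (hx : x ≠ 0) :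
    HasStrictFDerivAt (fun y : F ↦ ‖y‖ ^ a) ((a * ‖x‖ ^ (a - 2)) • innerSL ℝ x) x := by
  convert! (hasStrictFDerivAt_norm_sq x).rpow_const (p := a / 2) (by simp [hx]) using 0
  simp_rw [← Real.rpow_natCast_mul (norm_nonneg _), ← Nat.cast_smul_eq_nsmul ℝ, smul_smul]
  ring_nf

theorem fderiv_const_mul_norm_rpow_apply (c a : ℝ) {x : F} (hx : x ≠ 0) (v : F) :
    fderiv ℝ (fun y : F ↦ c * ‖y‖ ^ a) x v = c * a * ‖x‖ ^ (a - 2) * ⟪x, v⟫ := by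
  rw [((hasStrictFDerivAt_norm_rpow_of_ne_zero a hx).hasFDerivAt.const_mul c).fderiv]
  simp only [smul_apply, innerSL_apply_apply, smul_eq_mul]
  ring

theorem fderiv_fderiv_const_mul_norm_rpow_apply (c a : ℝ) {x : F} (hx : x ≠ 0) (v : F) :
    fderiv ℝ (fun y ↦ fderiv ℝ (fun z : F ↦ c * ‖z‖ ^ a) y v) x v
      = c * a * ((a - 2) * ‖x‖ ^ (a - 4) * ⟪x, v⟫ ^ 2 + ‖x‖ ^ (a - 2) * ‖v‖ ^ 2) := by
  have hfirst : (fun y ↦ fderiv ℝ (fun z : F ↦ c * ‖z‖ ^ a) y v)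
      =ᶠ[nhds x] fun y ↦ c * a * (‖y‖ ^ (a - 2) * ⟪y, v⟫) := by
    filter_upwards [isOpen_compl_singleton.mem_nhds hx] with y hy
    rw [fderiv_const_mul_norm_rpow_apply c a hy]
    ring
  have hinner : HasFDerivAt (fun y : F ↦ ⟪y, v⟫) (innerSL ℝ v) x := by
    convert (innerSL ℝ v).hasFDerivAt using 1
    ext y
    simp [real_inner_comm]
  have hderiv :=
    ((hasStrictFDerivAt_norm_rpow_of_ne_zero (a - 2) hx).hasFDerivAt.mul hinner).const_mul (c * a)
  simp only [Pi.mul_apply] at hderiv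
  rw [hfirst.fderiv_eq, hderiv.fderiv]
  simp only [smul_apply, add_apply, innerSL_apply_apply,
    smul_eq_mul, real_inner_self_eq_norm_sq, real_inner_comm v x]
  rw [show a - 2 - 2 = a - 4 by ring]
  ring

end InnerProductSpace

section Euclidean

variable {N : ℕ}

theorem lapl_congr_of_eventuallyEq {f g : E N → ℝ} {x : E N} (h : f =ᶠ[nhds x] g) :
    lapl f x = lapl g x := by
  refine Finset.sum_congr rfl fun i _ ↦ ?_
  have hderiv : (fun y ↦ fderiv ℝ f y (EuclideanSpace.single i 1))
      =ᶠ[nhds x] fun y ↦ fderiv ℝ g y (EuclideanSpace.single i 1) := by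
    filter_upwards [h.eventuallyEq_nhds] with y hy
    rw [hy.fderiv_eq]
  rw [hderiv.fderiv_eq]

theorem lapl_const_mul_norm_rpow (c a : ℝ) {x : E N} (hx : x ≠ 0) :
    lapl (fun y : E N ↦ c * ‖y‖ ^ a) x = c * (a * (a + N - 2)) * ‖x‖ ^ (a - 2) := by
  have hx0 : 0 < ‖x‖ := norm_pos_iff.mpr hx
  have hpow : ‖x‖ ^ (a - 4) * ‖x‖ ^ 2 = ‖x‖ ^ (a - 2) := by
    rw [← Real.rpow_natCast, ← Real.rpow_add hx0]
    ring_nf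
  unfold lapl
  simp only [fderiv_fderiv_const_mul_norm_rpow_apply c a hx, EuclideanSpace.inner_single_right,
    PiLp.norm_single, norm_one, one_pow, mul_one, conj_trivial, one_mul]
  rw [Finset.sum_congr rfl fun i _ ↦ show c * a * ((a - 2) * ‖x‖ ^ (a - 4) * x i ^ 2
      + ‖x‖ ^ (a - 2)) = c * a * (a - 2) * ‖x‖ ^ (a - 4) * x i ^ 2 + c * a * ‖x‖ ^ (a - 2)
      by ring]
  rw [Finset.sum_add_distrib, ← Finset.mul_sum, ← EuclideanSpace.real_norm_sq_eq,
    Finset.sum_const, Finset.card_univ, Fintype.card_fin, nsmul_eq_mul]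
  linear_combination c * a * (a - 2) * hpow

theorem bilapl_const_mul_norm_rpow (c a : ℝ) {x : E N} (hx : x ≠ 0) :
    bilapl (fun y : E N ↦ c * ‖y‖ ^ a) x
      = c * (a * (a + N - 2)) * ((a - 2) * (a + N - 4)) * ‖x‖ ^ (a - 4) := by
  have hlapl : lapl (fun y : E N ↦ c * ‖y‖ ^ a)
      =ᶠ[nhds x] fun y ↦ c * (a * (a + N - 2)) * ‖y‖ ^ (a - 2) := by
    filter_upwards [isOpen_compl_singleton.mem_nhds hx] with y hy
    exact lapl_const_mul_norm_rpow c a hy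
  rw [bilapl, lapl_congr_of_eventuallyEq hlapl, lapl_const_mul_norm_rpow _ _ hx]
  ring_nf

end Euclidean

section Exponents

variable {n p m : ℝ}

theorem one_lt_of_div_sub_four_lt (hn : 4 < n) (hp : n / (n - 4) < p) : 1 < p :=
  ((one_lt_div (by linarith)).mpr (by linarith)).trans hp

theorem four_div_sub_one_lt_sub_four (hn : 4 < n) (hp : n / (n - 4) < p) :
    4 / (p - 1) < n - 4 := by
  have hp1 := one_lt_of_div_sub_four_lt hn hp
  rw [div_lt_iff₀ (by linarith)]
  nlinarith [(div_lt_iff₀ (by linarith : 0 < n - 4)).mp hp]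

theorem biharmonic_coeff_pos (hm : 0 < m) (hmn : m < n - 4) :
    0 < m * (m + 2) * (m - n + 2) * (m - n + 4) := by
  have h₁ : 0 < m * (m + 2) := by positivity
  have h₂ : 0 < (m - n + 2) * (m - n + 4) := mul_pos_of_neg_of_neg (by linarith) (by linarith)
  simpa only [mul_assoc] using mul_pos h₁ h₂

theorem forcing_term_pos {ε M r : ℝ} (hε : 0 < ε) (hεM : ε ^ (p - 1) < M)
    (hmp : 4 < m * (p - 1)) (hr : 1 ≤ r) :
    0 < ε * M * r ^ (-m - 4) - ε ^ p * r ^ (-(m * p)) := by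
  have hεp : ε ^ p = ε * ε ^ (p - 1) := by
    conv_lhs => rw [show p = 1 + (p - 1) by ring]
    rw [Real.rpow_add hε, Real.rpow_one]
  refine sub_pos.mpr ?_
  calc ε ^ p * r ^ (-(m * p)) ≤ ε ^ p * r ^ (-m - 4) := by
        gcongr
        linarith
    _ < ε * M * r ^ (-m - 4) := by
        rw [hεp]
        gcongr

theorem abs_mul_rpow_neg_rpow {ε r : ℝ} (hε : 0 ≤ ε) (hr : 0 ≤ r) :
    |ε * r ^ (-m)| ^ p = ε ^ p * r ^ (-(m * p)) := by
  rw [abs_of_nonneg (by positivity), Real.mul_rpow hε (by positivity), ← Real.rpow_mul hr,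
    neg_mul]

end Exponents

/-- for `N ≥ 5` and supercritical `p > N/(N−4)`, the interval
`(4/(p−1), N−4)` is nonempty, and for any `m` in it and `M = m(m+2)(m−N+2)(m−N+4)`
one has `M > 0`, `Δ²(ε|x|^{−m}) = εM|x|^{−m−4}` for `x ≠ 0`; moreover, for `0 < ε`
with `ε^{p−1} < M`, the forcing term `f(x) = εM|x|^{−m−4} − ε^p|x|^{−mp}` is strictly
positive for `|x| ≥ 1`, the function `v(x) = ε|x|^{−m}` is a positive stationary
classical solution of `Δ²v = |v|^p + f` on `{|x| > 1}`, and `v = ε > 0` on the unit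
sphere. -/
theorem supercritical_stationary_solution
    (N : ℕ) (hN : 5 ≤ N) (p : ℝ) (hp : (N : ℝ) / ((N : ℝ) - 4) < p) :
    (4 / (p - 1) < (N : ℝ) - 4) ∧
    ∀ m : ℝ, 4 / (p - 1) < m → m < (N : ℝ) - 4 →
      (0 < m * (m + 2) * (m - N + 2) * (m - N + 4)) ∧
      (∀ ε : ℝ, 0 < ε → ∀ x : E N, x ≠ 0 →
        bilapl (fun y => ε * ‖y‖ ^ (-m)) x
          = ε * (m * (m + 2) * (m - N + 2) * (m - N + 4)) * ‖x‖ ^ (-m - 4)) ∧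
      (∀ ε : ℝ, 0 < ε → ε ^ (p - 1) < m * (m + 2) * (m - N + 2) * (m - N + 4) →
        (∀ x : E N, 1 ≤ ‖x‖ →
          0 < ε * (m * (m + 2) * (m - N + 2) * (m - N + 4)) * ‖x‖ ^ (-m - 4)
                - ε ^ p * ‖x‖ ^ (-(m * p))) ∧
        (∀ x : E N, 1 < ‖x‖ →
          0 < ε * ‖x‖ ^ (-m) ∧
          bilapl (fun y => ε * ‖y‖ ^ (-m)) x
            = |ε * ‖x‖ ^ (-m)| ^ p
              + (ε * (m * (m + 2) * (m - N + 2) * (m - N + 4)) * ‖x‖ ^ (-m - 4)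
                  - ε ^ p * ‖x‖ ^ (-(m * p)))) ∧
        (∀ x : E N, ‖x‖ = 1 → ε * ‖x‖ ^ (-m) = ε ∧ 0 < ε)) := by
  have hN4 : (4 : ℝ) < N := by exact_mod_cast hN
  have hp1 : 0 < p - 1 := sub_pos.mpr (one_lt_of_div_sub_four_lt hN4 hp)
  refine ⟨four_div_sub_one_lt_sub_four hN4 hp, fun m hm hmN ↦ ?_⟩
  have hm0 : 0 < m := (div_pos four_pos hp1).trans hm
  have hbilapl (ε : ℝ) (x : E N) (hx : x ≠ 0) : bilapl (fun y ↦ ε * ‖y‖ ^ (-m)) x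
      = ε * (m * (m + 2) * (m - N + 2) * (m - N + 4)) * ‖x‖ ^ (-m - 4) := by
    rw [bilapl_const_mul_norm_rpow ε (-m) hx]
    ring_nf
  refine ⟨biharmonic_coeff_pos hm0 hmN, fun ε _ ↦ hbilapl ε, fun ε hε hεM ↦ ?_⟩
  refine ⟨fun x ↦ forcing_term_pos hε hεM ((div_lt_iff₀ hp1).mp hm),
    fun x hx ↦ ⟨by positivity, ?_⟩, fun x hx ↦ ⟨by simp [hx], hε⟩⟩
  rw [hbilapl ε x (norm_pos_iff.mp (one_pos.trans hx)),
    abs_mul_rpow_neg_rpow hε.le (norm_nonneg x)]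
  ring
end
end

section
/- Let N ≥ 2, let ℓ ≥ 4 be a real number, and let ξ : ℝ → [0,1] be a C^∞ function with ξ(s) = 1 for 0 ≤ s ≤ 1, ξ(s) = 0 for s ≥ 2, and whose first four derivatives are bounded. Then there exists a constant C > 0 (depending only on ξ, ℓ and N) such that for every R > 0 and every x ∈ ℝ^N with R < |x| < 2R, the function x ↦ ξ(|x|/R)^ℓ satisfies |∇(Δ(ξ(|·|/R)^ℓ))(x)| ≤ C R^{−3} ξ(|x|/R)^{ℓ−4} and |Δ²(ξ(|·|/R)^ℓ)(x)| ≤ C R^{−4} ξ(|x|/R)^{ℓ−4}. -/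
/-!
Write `ξ(|x|/R)^ℓ = F(|x|²/R²)` with the one-variable profile `F(u) = η(u)^ℓ`, `η(u) = ξ(√u)`;
`η` is smooth because `ξ` is constant near `0`. On functions of `|x|²` the Laplacian acts as
`Δ(Φ(c|x|²)) = c·(4sΦ''(s) + 2NΦ'(s))` at `s = c|x|²`, so with `c = R⁻²` the quantities
`∇Δ` and `Δ²` of the cut-off are `R⁻³` resp. `R⁻⁴` times combinations of `F''`, `F'''`, `F''''`
at `s = |x|²/R² ∈ [1, 4]` with coefficients bounded there. Finally each derivative of `η^ℓ` costs
one power of `η`: `F⁽ᵏ⁾ = bₖ η^(ℓ-k)` with `bₖ` smooth, hence bounded on `[1, 4]`, and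
`η^(ℓ-k) ≤ η^(ℓ-4)` because `0 ≤ η ≤ 1`.
-/

open MeasureTheory Real Set

noncomputable section

open Asymptotics Filter
open scoped ContDiff

section RpowDerivatives

variable {g : ℝ → ℝ}

theorem hasDerivAt_mul_rpow {a : ℝ → ℝ} {p u : ℝ} (hp : 1 ≤ p) (hg0 : 0 ≤ g u)
    (ha : DifferentiableAt ℝ a u) (hg : DifferentiableAt ℝ g u) :
    HasDerivAt (fun v => a v * g v ^ p)
      ((deriv a u * g u + p * a u * deriv g u) * g u ^ (p - 1)) u := by
  refine (ha.hasDerivAt.mul (hg.hasDerivAt.rpow_const (Or.inr hp))).congr_deriv ?_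
  rw [show g u ^ p = g u ^ (p - 1) * g u by
    rw [← Real.rpow_add_one' hg0 (by linarith), sub_add_cancel]]
  ring

theorem exists_iterate_deriv_mul_rpow (hg : ContDiff ℝ ∞ g) (hg0 : ∀ u, 0 ≤ g u) :
    ∀ (k : ℕ) {a : ℝ → ℝ} {p : ℝ}, ContDiff ℝ ∞ a → (k : ℝ) ≤ p →
      ∃ b, ContDiff ℝ ∞ b ∧ deriv^[k] (fun u => a u * g u ^ p) = fun u => b u * g u ^ (p - k)
  | 0, a, _, ha, _ => ⟨a, ha, by simp⟩
  | k + 1, a, p, ha, hk => by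
    push_cast at hk
    have hda : ContDiff ℝ ∞ (deriv a) := (contDiff_infty_iff_deriv.1 ha).2
    have hdg : ContDiff ℝ ∞ (deriv g) := (contDiff_infty_iff_deriv.1 hg).2
    obtain ⟨b, hb, hb_eq⟩ := exists_iterate_deriv_mul_rpow hg hg0 k
      (a := fun u => deriv a u * g u + p * a u * deriv g u) (p := p - 1)
      ((hda.mul hg).add ((contDiff_const.mul ha).mul hdg)) (by linarith)
    have hderiv : deriv (fun u => a u * g u ^ p)
        = fun u => (deriv a u * g u + p * a u * deriv g u) * g u ^ (p - 1) := funext fun u =>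
      (hasDerivAt_mul_rpow (by linarith) (hg0 u) (ha.differentiable (by simp) u)
        (hg.differentiable (by simp) u)).deriv
    refine ⟨b, hb, ?_⟩
    rw [Function.iterate_succ_apply, hderiv, hb_eq]
    push_cast
    ring_nf

theorem isBigO_principal_mul_of_continuousOn {α : Type*} [TopologicalSpace α] {K : Set α}
    (hK : IsCompact K) {a f h : α → ℝ} (ha : ContinuousOn a K) (hf : f =O[𝓟 K] h) :
    (fun x => a x * f x) =O[𝓟 K] h := by
  obtain ⟨C, hC⟩ := hK.exists_bound_of_continuousOn ha
  have ha_one : a =O[𝓟 K] fun _ => (1 : ℝ) := isBigO_principal.2 ⟨C, by simpa using hC⟩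
  simpa using ha_one.mul hf

theorem isBigO_iterate_deriv_rpow (hg : ContDiff ℝ ∞ g) (hg0 : ∀ u, 0 ≤ g u)
    (hg1 : ∀ u, g u ≤ 1) {K : Set ℝ} (hK : IsCompact K) {k : ℕ} {p q : ℝ} (hq : 0 ≤ q)
    (hkq : k + q ≤ p) : deriv^[k] (fun u => g u ^ p) =O[𝓟 K] fun u => g u ^ q := by
  obtain ⟨b, hb, hb_eq⟩ := exists_iterate_deriv_mul_rpow hg hg0 k (a := fun _ => 1)
    contDiff_const (by linarith)
  simp only [one_mul] at hb_eq
  rw [hb_eq]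
  refine isBigO_principal_mul_of_continuousOn hK hb.continuous.continuousOn
    (isBigO_principal.2 ⟨1, fun u _ => ?_⟩)
  rw [one_mul, Real.norm_of_nonneg (Real.rpow_nonneg (hg0 u) _),
    Real.norm_of_nonneg (Real.rpow_nonneg (hg0 u) _)]
  exact Real.rpow_le_rpow_of_exponent_ge' (hg0 u) (hg1 u) hq (by linarith)

end RpowDerivatives

theorem contDiff_comp_sqrt {ξ : ℝ → ℝ} {n : WithTop ℕ∞} {c : ℝ} (hξ : ContDiff ℝ n ξ)
    (hξ_const : ∀ s, 0 ≤ s → s ≤ 1 → ξ s = c) : ContDiff ℝ n fun u => ξ √u := by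
  refine contDiff_iff_contDiffAt.2 fun u => ?_
  rcases lt_or_ge u 1 with hu | hu
  · refine (contDiffAt_const (c := c)).congr_of_eventuallyEq ?_
    filter_upwards [Iio_mem_nhds hu] with v hv
    exact hξ_const _ (Real.sqrt_nonneg v) (Real.sqrt_le_one.2 (le_of_lt hv))
  · exact hξ.contDiffAt.comp u (Real.contDiffAt_sqrt (by linarith))

section Radial

variable {N : ℕ} {Φ : ℝ → ℝ} {V : Type*} [NormedAddCommGroup V] [InnerProductSpace ℝ V]

/-- The Laplacian on `ℝ^N` acting on profiles `Φ` of functions `x ↦ Φ(|x|²)`. -/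
def radialLapl (N : ℕ) (Φ : ℝ → ℝ) (s : ℝ) : ℝ :=
  4 * s * deriv^[2] Φ s + 2 * N * deriv Φ s

theorem hasFDerivAt_comp_mul_norm_sq {φ c : ℝ} {y : V} (hΦ : HasDerivAt Φ φ (c * ‖y‖ ^ 2)) :
    HasFDerivAt (fun z : V => Φ (c * ‖z‖ ^ 2)) ((φ * c * 2) • innerSL ℝ y) y := by
  refine (hΦ.comp_hasFDerivAt y
    ((hasStrictFDerivAt_norm_sq y).hasFDerivAt.const_mul c)).congr_fderiv ?_
  ext z
  simp only [smul_apply, innerSL_apply_apply, smul_eq_mul, nsmul_eq_mul]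
  ring

theorem fderiv_comp_mul_norm_sq_single (hΦ : Differentiable ℝ Φ) (c : ℝ) (y : E N)
    (i : Fin N) :
    fderiv ℝ (fun z : E N => Φ (c * ‖z‖ ^ 2)) y (EuclideanSpace.single i 1)
      = deriv Φ (c * ‖y‖ ^ 2) * c * 2 * y i := by
  rw [(hasFDerivAt_comp_mul_norm_sq (hΦ _).hasDerivAt).fderiv]
  simp [EuclideanSpace.inner_single_right]

theorem second_partial_comp_mul_norm_sq (hΦ : ContDiff ℝ 2 Φ) (c : ℝ) (x : E N)
    (i : Fin N) :
    fderiv ℝ (fun y => fderiv ℝ (fun z : E N => Φ (c * ‖z‖ ^ 2)) y (EuclideanSpace.single i 1)) x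
        (EuclideanSpace.single i 1)
      = deriv^[2] Φ (c * ‖x‖ ^ 2) * (c * 2 * x i) ^ 2 + deriv Φ (c * ‖x‖ ^ 2) * c * 2 := by
  have hΦ' : Differentiable ℝ (deriv Φ) := (hΦ.deriv' (n := 1)).differentiable one_ne_zero
  simp_rw [fderiv_comp_mul_norm_sq_single (hΦ.differentiable (by norm_num)), mul_assoc]
  have hcoord : HasFDerivAt (fun y : E N => c * (2 * y i))
      ((c * 2) • (EuclideanSpace.proj i : E N →L[ℝ] ℝ)) x := by
    simpa [mul_assoc] using ((EuclideanSpace.proj i : E N →L[ℝ] ℝ).hasFDerivAt).const_mul (c * 2)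
  rw [((hasFDerivAt_comp_mul_norm_sq (hΦ' _).hasDerivAt).fun_mul hcoord).fderiv]
  simp only [add_apply, smul_apply, PiLp.proj_apply, PiLp.single_eq_same, smul_eq_mul,
    coe_innerSL_apply, EuclideanSpace.inner_single_right, ringHom_apply,
    Function.iterate_succ_apply, Function.iterate_zero_apply]
  ring

theorem lapl_comp_mul_norm_sq (hΦ : ContDiff ℝ 2 Φ) (c : ℝ) (x : E N) :
    lapl (fun y : E N => Φ (c * ‖y‖ ^ 2)) x = c * radialLapl N Φ (c * ‖x‖ ^ 2) := by
  simp only [lapl, second_partial_comp_mul_norm_sq hΦ]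
  simp only [Finset.sum_add_distrib, mul_pow, ← Finset.mul_sum, Finset.sum_const, Finset.card_univ,
    Fintype.card_fin, nsmul_eq_mul, ← EuclideanSpace.real_norm_sq_eq, radialLapl]
  ring

theorem norm_gradient_comp_mul_norm_sq [CompleteSpace V] (hΦ : Differentiable ℝ Φ) (c : ℝ)
    (x : V) :
    ‖gradient (fun y : V => Φ (c * ‖y‖ ^ 2)) x‖ = 2 * |c| * ‖x‖ * |deriv Φ (c * ‖x‖ ^ 2)| := by
  rw [gradient, (hasFDerivAt_comp_mul_norm_sq (hΦ _).hasDerivAt).fderiv,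
    LinearIsometryEquiv.norm_map, norm_smul, innerSL_apply_norm]
  simp only [Real.norm_eq_abs, abs_mul, abs_two]
  ring

theorem radialLapl_const_mul (c : ℝ) :
    radialLapl N (fun s => c * Φ s) = fun s => c * radialLapl N Φ s := by
  funext s
  simp only [radialLapl, Function.iterate_succ_apply, Function.iterate_zero_apply,
    deriv_const_mul_field']
  ring

theorem contDiff_radialLapl {n : ℕ} (hΦ : ContDiff ℝ (n + 2 : ℕ) Φ) :
    ContDiff ℝ n (radialLapl N Φ) := by
  have h1 : ContDiff ℝ n (deriv^[1] Φ) := (hΦ.of_le (by norm_cast; omega)).iterate_deriv' n 1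
  have h2 : ContDiff ℝ n (deriv^[2] Φ) := hΦ.iterate_deriv' n 2
  exact ((contDiff_const.mul contDiff_id).mul h2).add (contDiff_const.mul h1)

theorem hasDerivAt_iterate_deriv {n k : ℕ} (hΦ : ContDiff ℝ n Φ) (hk : k < n) (s : ℝ) :
    HasDerivAt (deriv^[k] Φ) (deriv^[k + 1] Φ s) s := by
  rw [Function.iterate_succ_apply', ← iteratedDeriv_eq_iterate]
  exact (hΦ.differentiable_iteratedDeriv k (by exact_mod_cast hk) s).hasDerivAt

theorem deriv_radialLapl (hΦ : ContDiff ℝ 3 Φ) :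
    deriv (radialLapl N Φ) = fun s => (4 + 2 * N) * deriv^[2] Φ s + 4 * s * deriv^[3] Φ s := by
  funext s
  refine ((((hasDerivAt_id s).const_mul 4).mul (hasDerivAt_iterate_deriv hΦ (k := 2)
    (by norm_num) s)).add ((hasDerivAt_iterate_deriv hΦ (k := 1) (by norm_num) s).const_mul
    (2 * (N : ℝ)))).deriv.trans ?_
  simp only [mul_one, Nat.reduceAdd, id_eq]
  ring

theorem radialLapl_radialLapl (hΦ : ContDiff ℝ 4 Φ) (s : ℝ) :
    radialLapl N (radialLapl N Φ) s = 4 * s * ((8 + 2 * N) * deriv^[3] Φ s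
      + 4 * s * deriv^[4] Φ s) + 2 * N * ((4 + 2 * N) * deriv^[2] Φ s + 4 * s * deriv^[3] Φ s) := by
  have hderiv := deriv_radialLapl (N := N) (hΦ.of_le (by norm_num))
  have hderiv2 : deriv (deriv (radialLapl N Φ)) s
      = (8 + 2 * N) * deriv^[3] Φ s + 4 * s * deriv^[4] Φ s := by
    rw [hderiv]
    refine ((((hasDerivAt_iterate_deriv hΦ (k := 2) (by norm_num) s).const_mul _).add
      (((hasDerivAt_id s).const_mul 4).mul (hasDerivAt_iterate_deriv hΦ (k := 3)
      (by norm_num) s)))).deriv.trans ?_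
    simp only [mul_one, Nat.reduceAdd, id_eq]
    ring
  rw [radialLapl, Function.iterate_succ_apply, Function.iterate_one, hderiv2, hderiv]

theorem lapl_comp_mul_norm_sq_eq (hΦ : ContDiff ℝ 2 Φ) (c : ℝ) :
    lapl (fun y : E N => Φ (c * ‖y‖ ^ 2)) = fun y => c * radialLapl N Φ (c * ‖y‖ ^ 2) :=
  funext (lapl_comp_mul_norm_sq hΦ c)

theorem norm_gradient_lapl_comp_mul_norm_sq (hΦ : ContDiff ℝ 3 Φ) (c : ℝ) (x : E N) :
    ‖gradient (lapl fun y : E N => Φ (c * ‖y‖ ^ 2)) x‖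
      = 2 * c ^ 2 * ‖x‖ * |deriv (radialLapl N Φ) (c * ‖x‖ ^ 2)| := by
  have hL : Differentiable ℝ fun s => c * radialLapl N Φ s :=
    (contDiff_const.mul (contDiff_radialLapl (n := 1) hΦ)).differentiable one_ne_zero
  rw [lapl_comp_mul_norm_sq_eq (hΦ.of_le (by norm_num)), norm_gradient_comp_mul_norm_sq hL,
    deriv_const_mul_field', abs_mul, ← sq_abs c]
  ring

theorem bilapl_comp_mul_norm_sq (hΦ : ContDiff ℝ 4 Φ) (c : ℝ) (x : E N) :
    bilapl (fun y : E N => Φ (c * ‖y‖ ^ 2)) x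
      = c ^ 2 * radialLapl N (radialLapl N Φ) (c * ‖x‖ ^ 2) := by
  have hL : ContDiff ℝ 2 fun s => c * radialLapl N Φ s :=
    contDiff_const.mul (contDiff_radialLapl (n := 2) hΦ)
  rw [bilapl, lapl_comp_mul_norm_sq_eq (hΦ.of_le (by norm_num)), lapl_comp_mul_norm_sq hL,
    radialLapl_const_mul]
  ring

end Radial

section Estimates

variable {N : ℕ} {Φ g : ℝ → ℝ} {K : Set ℝ}

theorem isBigO_deriv_radialLapl (hK : IsCompact K) (hΦ : ContDiff ℝ 3 Φ)
    (h₂ : deriv^[2] Φ =O[𝓟 K] g) (h₃ : deriv^[3] Φ =O[𝓟 K] g) :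
    deriv (radialLapl N Φ) =O[𝓟 K] g := by
  rw [deriv_radialLapl hΦ]
  exact (h₂.const_mul_left _).add
    (isBigO_principal_mul_of_continuousOn hK (by fun_prop) h₃)

theorem isBigO_radialLapl_radialLapl (hK : IsCompact K) (hΦ : ContDiff ℝ 4 Φ)
    (h₂ : deriv^[2] Φ =O[𝓟 K] g) (h₃ : deriv^[3] Φ =O[𝓟 K] g) (h₄ : deriv^[4] Φ =O[𝓟 K] g) :
    radialLapl N (radialLapl N Φ) =O[𝓟 K] g := by
  have hmul : ∀ {f : ℝ → ℝ}, f =O[𝓟 K] g → (fun s => 4 * s * f s) =O[𝓟 K] g :=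
    isBigO_principal_mul_of_continuousOn hK (by fun_prop)
  simp_rw [funext (radialLapl_radialLapl (N := N) hΦ)]
  exact (hmul ((h₃.const_mul_left _).add (hmul h₄))).add
    (((h₂.const_mul_left _).add (hmul h₃)).const_mul_left _)

theorem annulus_estimates_of_isBigO (hΦ : ContDiff ℝ 4 Φ)
    (hΦ_dom : ∀ k, 2 ≤ k → k ≤ 4 → deriv^[k] Φ =O[𝓟 (Icc 1 4)] g) :
    ∃ C > 0, ∀ R > 0, ∀ x : E N, R ≤ ‖x‖ → ‖x‖ ≤ 2 * R →
      ‖gradient (lapl fun y : E N => Φ ((R ^ 2)⁻¹ * ‖y‖ ^ 2)) x‖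
          ≤ C * (R ^ 3)⁻¹ * ‖g ((R ^ 2)⁻¹ * ‖x‖ ^ 2)‖ ∧
        |bilapl (fun y : E N => Φ ((R ^ 2)⁻¹ * ‖y‖ ^ 2)) x|
          ≤ C * (R ^ 4)⁻¹ * ‖g ((R ^ 2)⁻¹ * ‖x‖ ^ 2)‖ := by
  obtain ⟨C₁, hC₁, hgrad⟩ := (isBigO_deriv_radialLapl (N := N) isCompact_Icc
    (hΦ.of_le (by norm_num)) (hΦ_dom 2 le_rfl (by norm_num))
    (hΦ_dom 3 (by norm_num) (by norm_num))).exists_pos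
  obtain ⟨C₂, hC₂, hbil⟩ := (isBigO_radialLapl_radialLapl (N := N) isCompact_Icc hΦ
    (hΦ_dom 2 le_rfl (by norm_num)) (hΦ_dom 3 (by norm_num) (by norm_num))
    (hΦ_dom 4 (by norm_num) le_rfl)).exists_pos
  refine ⟨4 * C₁ + C₂, by positivity, fun R hR x hx₁ hx₂ => ?_⟩
  set s := (R ^ 2)⁻¹ * ‖x‖ ^ 2
  have hs : s ∈ Icc (1 : ℝ) 4 := by
    have hs_eq : s = (‖x‖ / R) ^ 2 := by rw [div_pow, div_eq_inv_mul]
    have h₁ : 1 ≤ ‖x‖ / R := (one_le_div hR).2 hx₁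
    have h₂ : ‖x‖ / R ≤ 2 := (div_le_iff₀ hR).2 (by linarith)
    rw [hs_eq]
    constructor <;> nlinarith
  have hgrad_s := isBigOWith_principal.1 hgrad s hs
  have hbil_s := isBigOWith_principal.1 hbil s hs
  rw [Real.norm_eq_abs] at hgrad_s hbil_s
  rw [norm_gradient_lapl_comp_mul_norm_sq (hΦ.of_le (by norm_num)),
    bilapl_comp_mul_norm_sq hΦ, abs_mul, abs_of_nonneg (sq_nonneg (R ^ 2)⁻¹)]
  constructor
  · calc 2 * ((R ^ 2)⁻¹) ^ 2 * ‖x‖ * |deriv (radialLapl N Φ) s|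
        ≤ 2 * ((R ^ 2)⁻¹) ^ 2 * (2 * R) * (C₁ * ‖g s‖) := by gcongr
      _ = 4 * C₁ * (R ^ 3)⁻¹ * ‖g s‖ := by field_simp; ring
      _ ≤ (4 * C₁ + C₂) * (R ^ 3)⁻¹ * ‖g s‖ := by gcongr; linarith
  · calc ((R ^ 2)⁻¹) ^ 2 * |radialLapl N (radialLapl N Φ) s|
        ≤ ((R ^ 2)⁻¹) ^ 2 * (C₂ * ‖g s‖) := by gcongr
      _ = C₂ * (R ^ 4)⁻¹ * ‖g s‖ := by field_simp
      _ ≤ (4 * C₁ + C₂) * (R ^ 4)⁻¹ * ‖g s‖ := by gcongr; linarith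

end Estimates

theorem cutoff_estimates_general
    (N : ℕ) (ℓ : ℝ) (hℓ : 4 ≤ ℓ)
    (ξ : ℝ → ℝ)
    (hξ_smooth : ContDiff ℝ (⊤ : ℕ∞) ξ)
    (hξ_range : ∀ s, ξ s ∈ Icc (0 : ℝ) 1)
    (hξ_one : ∀ s : ℝ, 0 ≤ s → s ≤ 1 → ξ s = 1) :
    ∃ C > (0 : ℝ), ∀ R : ℝ, 0 < R → ∀ x : E N, R < ‖x‖ → ‖x‖ < 2 * R →
      ‖gradient (lapl (fun y : E N => ξ (‖y‖ / R) ^ ℓ)) x‖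
        ≤ C * R ^ ((-3 : ℝ)) * ξ (‖x‖ / R) ^ (ℓ - 4) ∧
      |bilapl (fun y : E N => ξ (‖y‖ / R) ^ ℓ) x|
        ≤ C * R ^ ((-4 : ℝ)) * ξ (‖x‖ / R) ^ (ℓ - 4) := by
  set η : ℝ → ℝ := fun u => ξ √u
  have hη : ContDiff ℝ ∞ η := contDiff_comp_sqrt hξ_smooth hξ_one
  have hη₀ : ∀ u, 0 ≤ η u := fun u => (hξ_range _).1
  have hF : ContDiff ℝ 4 fun u => η u ^ ℓ :=
    (Real.contDiff_rpow_const_of_le (by exact_mod_cast hℓ)).comp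
      (hη.of_le (WithTop.coe_le_coe.2 le_top))
  have hF_dom : ∀ k, 2 ≤ k → k ≤ 4 →
      deriv^[k] (fun u => η u ^ ℓ) =O[𝓟 (Icc 1 4)] fun u => η u ^ (ℓ - 4) := fun k _ hk =>
    isBigO_iterate_deriv_rpow hη hη₀ (fun u => (hξ_range _).2)
      isCompact_Icc (by linarith) (by linarith [show (k : ℝ) ≤ 4 by exact_mod_cast hk])
  obtain ⟨C, hC, hest⟩ := annulus_estimates_of_isBigO (N := N) hF hF_dom
  refine ⟨C, hC, fun R hR x hx₁ hx₂ => ?_⟩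
  have hprofile : ∀ y : E N, ξ (‖y‖ / R) = η ((R ^ 2)⁻¹ * ‖y‖ ^ 2) := fun y => by
    rw [← div_eq_inv_mul, ← div_pow]
    exact congrArg ξ (Real.sqrt_sq (by positivity)).symm
  simp only [hprofile, Real.rpow_neg hR.le, Real.rpow_ofNat]
  obtain ⟨hgrad, hbil⟩ := hest R hR x hx₁.le hx₂.le
  rw [Real.norm_of_nonneg (Real.rpow_nonneg (hη₀ _) _)] at hgrad hbil
  exact ⟨hgrad, hbil⟩

/-- derivative estimates for the rescaled cut-off
`x ↦ ξ(|x|/R)^ℓ` on the annulus `R < |x| < 2R`: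
`|∇(Δ(ξ(|·|/R)^ℓ))(x)| ≤ CR⁻³ ξ(|x|/R)^{ℓ−4}` and
`|Δ²(ξ(|·|/R)^ℓ)(x)| ≤ CR⁻⁴ ξ(|x|/R)^{ℓ−4}`. -/
theorem cutoff_estimates
    (N : ℕ) (hN : 2 ≤ N) (ℓ : ℝ) (hℓ : 4 ≤ ℓ)
    (ξ : ℝ → ℝ)
    (hξ_smooth : ContDiff ℝ (⊤ : ℕ∞) ξ)
    (hξ_range : ∀ s, ξ s ∈ Icc (0 : ℝ) 1)
    (hξ_one : ∀ s : ℝ, 0 ≤ s → s ≤ 1 → ξ s = 1)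
    (hξ_zero : ∀ s : ℝ, 2 ≤ s → ξ s = 0)
    (hξ_bdd : ∀ k : ℕ, 1 ≤ k → k ≤ 4 → ∃ C : ℝ, ∀ s, |iteratedDeriv k ξ s| ≤ C) :
    ∃ C > (0 : ℝ), ∀ R : ℝ, 0 < R → ∀ x : E N, R < ‖x‖ → ‖x‖ < 2 * R →
      ‖gradient (lapl (fun y : E N => ξ (‖y‖ / R) ^ ℓ)) x‖
        ≤ C * R ^ ((-3 : ℝ)) * ξ (‖x‖ / R) ^ (ℓ - 4) ∧
      |bilapl (fun y : E N => ξ (‖y‖ / R) ^ ℓ) x|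
        ≤ C * R ^ ((-4 : ℝ)) * ξ (‖x‖ / R) ^ (ℓ - 4) :=
  cutoff_estimates_general N ℓ hℓ ξ hξ_smooth hξ_range hξ_one
end
end

section
/- Let N ≥ 2, p > 1, p' = p/(p−1), and let ℓ ≥ 4p' be a real number. Let ζ : ℝ → [0,1] be a C^∞ function with ζ(s) = 1 for 0 ≤ s ≤ 1/2 and ζ(s) = 0 for s ≥ 1, and let ξ : ℝ → [0,1] be a C^∞ function with ξ(s) = 1 for 0 ≤ s ≤ 1, ξ(s) = 0 for s ≥ 2, and whose first four derivatives are bounded. For T > 0 and R > 1 define φ₃(x,t) = ζ(t/T)^ℓ ξ(|x|/R)^ℓ on D^c × [0,T]. Then there exists a constant C > 0, independent of T and R, such that ∫₀^T ∫_{D^c} φ₃(x,t)^{−1/(p−1)} |Δ²_x φ₃(x,t)|^{p'} dx dt ≤ C T R^{N − 4p'}, where the integrand is interpreted as 0 on the set where φ₃ vanishes (Δ²_x denotes the biharmonic operator acting on the x variable). -/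
open MeasureTheory Real Set

noncomputable section

/-- The exterior domain `D^c`, the complement of the closed unit ball. -/
def Dc (N : ℕ) : Set (E N) := {x | 1 < ‖x‖}

/-!
Since `Δ²` acts only on `x`, the factor `a = ζ(t/T)^ℓ ∈ [0,1]` comes out of the bilaplacian and
it suffices to control `ψ_R^ℓ` with `ψ_R = ξ(|·|/R) = ψ_1(·/R)`. The function `ψ_1` is smooth
with compact support, so its derivatives of order `i ≤ 4` are bounded by `D^i`; by scaling
those of `ψ_R` are bounded by `(D/R)^i`, and Faà di Bruno gives
`|Δ²(ψ_R^ℓ)| ≤ K R^{-4} ψ_R^{ℓ-4}`. Hence, with `φ₃ = (a ψ_R)^ℓ` and `1/(p-1) = p' - 1`,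
`φ₃^{-1/(p-1)} |Δ²φ₃|^{p'} ≤ (K R^{-4})^{p'} (a ψ_R)^{ℓ - 4p'} ≤ (K R^{-4})^{p'}` as `ℓ ≥ 4p'`.
The integrand vanishes for `|x| > 2R`, and `B_{2R} × [0,T]` has measure `ω_N (2R)^N T`.
-/

open scoped Nat

section IteratedFDeriv

variable {F G : Type*} [NormedAddCommGroup F] [NormedSpace ℝ F]
  [NormedAddCommGroup G] [NormedSpace ℝ G]

theorem norm_iteratedFDeriv_fderiv_apply_le {g : F → G} {k : ℕ} (hg : ContDiff ℝ (k + 1) g)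
    (v : F) (x : F) :
    ‖iteratedFDeriv ℝ k (fun y => fderiv ℝ g y v) x‖ ≤ ‖v‖ * ‖iteratedFDeriv ℝ (k + 1) g x‖ := by
  rw [← norm_iteratedFDeriv_fderiv]
  exact norm_iteratedFDeriv_clm_apply_const (hg.fderiv_right le_rfl).contDiffAt le_rfl

theorem norm_iteratedFDeriv_comp_const_smul {f : F → G} {i : ℕ} (hf : ContDiff ℝ i f)
    (c : ℝ) (x : F) :
    ‖iteratedFDeriv ℝ i (fun y => f (c • y)) x‖ = |c| ^ i * ‖iteratedFDeriv ℝ i f (c • x)‖ := by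
  rw [iteratedFDeriv_comp_const_smul c hf, norm_smul, norm_pow, Real.norm_eq_abs]

theorem exists_norm_iteratedFDeriv_le_pow_of_hasCompactSupport {g : F → G} {n : ℕ}
    (hg : ContDiff ℝ n g) (hsupp : HasCompactSupport g) :
    ∃ D > 0, ∀ i, 1 ≤ i → i ≤ n → ∀ x, ‖iteratedFDeriv ℝ i g x‖ ≤ D ^ i := by
  have hbdd : ∀ i : Fin (n + 1), ∃ C, ∀ x, ‖iteratedFDeriv ℝ i g x‖ ≤ C := fun i =>
    (hsupp.iteratedFDeriv i).exists_bound_of_continuous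
      (hg.continuous_iteratedFDeriv (mod_cast i.is_le))
  choose C hC using hbdd
  have hD : 1 ≤ 1 + ∑ j, |C j| := le_add_of_nonneg_right (by positivity)
  refine ⟨1 + ∑ j, |C j|, by linarith, fun i hi1 hin x => ?_⟩
  calc ‖iteratedFDeriv ℝ i g x‖ ≤ C ⟨i, by omega⟩ := hC ⟨i, by omega⟩ x
    _ ≤ ∑ j, |C j| := (le_abs_self _).trans
        (Finset.single_le_sum (fun j _ => abs_nonneg (C j)) (Finset.mem_univ _))
    _ ≤ 1 + ∑ j, |C j| := by linarith
    _ ≤ (1 + ∑ j, |C j|) ^ i := le_self_pow₀ hD (by omega)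

end IteratedFDeriv

theorem iteratedDeriv_rpow_const (ℓ : ℝ) (k : ℕ) :
    iteratedDeriv k (fun x : ℝ => x ^ ℓ)
      = fun x => (∏ i ∈ Finset.range k, (ℓ - i)) * x ^ (ℓ - k) := by
  induction k with
  | zero => simp
  | succ k ih =>
    ext x
    rw [iteratedDeriv_succ, ih, deriv_const_mul_field']
    simp only [Real.deriv_rpow_const, Finset.prod_range_succ]
    push_cast
    ring_nf

theorem abs_iteratedDeriv_rpow_const_le {ℓ z : ℝ} {k n : ℕ} (hz : z ∈ Icc (0 : ℝ) 1) (hkn : k ≤ n)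
    (hnℓ : (n : ℝ) ≤ ℓ) (hℓ : 1 ≤ ℓ) :
    |iteratedDeriv k (fun x : ℝ => x ^ ℓ) z| ≤ ℓ ^ n * z ^ (ℓ - n) := by
  have hk : (k : ℝ) ≤ n := mod_cast hkn
  rw [iteratedDeriv_rpow_const, abs_mul, Finset.abs_prod, abs_of_nonneg (rpow_nonneg hz.1 _)]
  have hprod : ∏ i ∈ Finset.range k, |ℓ - i| ≤ ℓ ^ n :=
    calc ∏ i ∈ Finset.range k, |ℓ - i| ≤ ∏ _i ∈ Finset.range k, ℓ := by
          refine Finset.prod_le_prod (fun _ _ => abs_nonneg _) fun i hi => ?_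
          have hi : (i : ℝ) < k := mod_cast Finset.mem_range.mp hi
          rw [abs_of_nonneg (by linarith)]
          linarith [(Nat.cast_nonneg i : (0 : ℝ) ≤ i)]
      _ = ℓ ^ k := by rw [Finset.prod_const, Finset.card_range]
      _ ≤ ℓ ^ n := pow_le_pow_right₀ hℓ hkn
  exact mul_le_mul hprod (rpow_le_rpow_of_exponent_ge' hz.1 hz.2 (by linarith) (by linarith))
    (rpow_nonneg hz.1 _) (by positivity)

theorem hasCompactSupport_comp_norm {F G : Type*} [NormedAddCommGroup F] [ProperSpace F] [Zero G]
    {ξ : ℝ → G} {r : ℝ} (hξ : ∀ s, r ≤ s → ξ s = 0) : HasCompactSupport (fun x : F => ξ ‖x‖) :=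
  HasCompactSupport.intro (isCompact_closedBall 0 r) fun x hx =>
    hξ _ (not_le.1 (by simpa using hx)).le

section Cutoff

variable {F : Type*} [NormedAddCommGroup F] [NormedSpace ℝ F]

theorem norm_iteratedFDeriv_rpow_comp_le {f : F → ℝ} {n : ℕ} {ℓ D : ℝ} (hf : ContDiff ℝ n f)
    (hnℓ : (n : ℝ) ≤ ℓ) (hℓ : 1 ≤ ℓ) {x : F} (hx : f x ∈ Icc (0 : ℝ) 1)
    (hD : ∀ i, 1 ≤ i → i ≤ n → ‖iteratedFDeriv ℝ i f x‖ ≤ D ^ i) :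
    ‖iteratedFDeriv ℝ n (fun y => f y ^ ℓ) x‖ ≤ n ! * ℓ ^ n * D ^ n * f x ^ (ℓ - n) := by
  have h := norm_iteratedFDeriv_comp_le (g := fun t : ℝ => t ^ ℓ) (contDiff_rpow_const_of_le hnℓ)
    hf le_rfl x (C := ℓ ^ n * f x ^ (ℓ - n)) (fun i hi => by
      rw [norm_iteratedFDeriv_eq_norm_iteratedDeriv, Real.norm_eq_abs]
      exact abs_iteratedDeriv_rpow_const_le hx hi hnℓ hℓ) hD
  calc _ ≤ n ! * (ℓ ^ n * f x ^ (ℓ - n)) * D ^ n := h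
    _ = _ := by ring

theorem exists_norm_iteratedFDeriv_rpow_comp_inv_smul_le {g : F → ℝ} {n : ℕ} {ℓ : ℝ}
    (hg : ContDiff ℝ n g) (hsupp : HasCompactSupport g) (hg01 : ∀ x, g x ∈ Icc (0 : ℝ) 1)
    (hnℓ : (n : ℝ) ≤ ℓ) (hℓ : 1 ≤ ℓ) :
    ∃ K > 0, ∀ R > 0, ∀ x, ‖iteratedFDeriv ℝ n (fun y => g (R⁻¹ • y) ^ ℓ) x‖
      ≤ K * g (R⁻¹ • x) ^ (ℓ - n) / R ^ n := by
  obtain ⟨D, hD0, hD⟩ := exists_norm_iteratedFDeriv_le_pow_of_hasCompactSupport hg hsupp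
  refine ⟨n ! * ℓ ^ n * D ^ n, by positivity, fun R hR x => ?_⟩
  have hscaled : ∀ i, 1 ≤ i → i ≤ n →
      ‖iteratedFDeriv ℝ i (fun y => g (R⁻¹ • y)) x‖ ≤ (D / R) ^ i := fun i hi hin => by
    rw [norm_iteratedFDeriv_comp_const_smul (hg.of_le (mod_cast hin)), abs_of_pos (inv_pos.2 hR),
      div_eq_inv_mul, mul_pow]
    gcongr
    exact hD i hi hin _
  calc _ ≤ n ! * ℓ ^ n * (D / R) ^ n * g (R⁻¹ • x) ^ (ℓ - n) :=
        norm_iteratedFDeriv_rpow_comp_le (hg.comp (contDiff_const_smul _)) hnℓ hℓ (hg01 _) hscaled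
    _ = _ := by rw [div_pow]; ring

theorem norm_div_eq_norm_inv_smul {R : ℝ} (hR : 0 < R) (y : F) : ‖y‖ / R = ‖R⁻¹ • y‖ := by
  rw [norm_smul_of_nonneg (inv_nonneg.2 hR.le), div_eq_inv_mul]

end Cutoff

section Radial

variable {F : Type*} [NormedAddCommGroup F] [InnerProductSpace ℝ F]

theorem contDiff_comp_norm {G : Type*} [NormedAddCommGroup G] [NormedSpace ℝ G] {ξ : ℝ → G}
    {n : WithTop ℕ∞} (hξ : ContDiff ℝ n ξ) {c : G} (hc : ∀ s, 0 ≤ s → s ≤ 1 → ξ s = c) :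
    ContDiff ℝ n (fun x : F => ξ ‖x‖) := by
  refine contDiff_iff_contDiffAt.2 fun z => ?_
  rcases eq_or_ne z 0 with rfl | hz
  · refine (contDiffAt_const (c := c)).congr_of_eventuallyEq ?_
    filter_upwards [Metric.ball_mem_nhds (0 : F) one_pos] with y hy
    exact hc _ (norm_nonneg y) (mem_ball_zero_iff.1 hy).le
  · exact hξ.contDiffAt.comp z (contDiffAt_norm ℝ hz)

variable {ξ : ℝ → ℝ} {n : ℕ} {ℓ : ℝ}

theorem contDiff_radial_cutoff_rpow (hξ : ContDiff ℝ n ξ)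
    (hone : ∀ s, 0 ≤ s → s ≤ 1 → ξ s = 1) (hnℓ : (n : ℝ) ≤ ℓ) {R : ℝ} (hR : 0 < R) :
    ContDiff ℝ n (fun y : F => ξ (‖y‖ / R) ^ ℓ) := by
  simp only [norm_div_eq_norm_inv_smul hR]
  exact (contDiff_rpow_const_of_le hnℓ).comp
    ((contDiff_comp_norm hξ hone).comp (contDiff_const_smul _))

theorem exists_norm_iteratedFDeriv_radial_cutoff_rpow_le [FiniteDimensional ℝ F]
    (hξ : ContDiff ℝ n ξ) (hξ01 : ∀ s, ξ s ∈ Icc (0 : ℝ) 1)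
    (hone : ∀ s, 0 ≤ s → s ≤ 1 → ξ s = 1) (hzero : ∀ s, 2 ≤ s → ξ s = 0)
    (hnℓ : (n : ℝ) ≤ ℓ) (hℓ : 1 ≤ ℓ) :
    ∃ K > 0, ∀ R > 0, ∀ x : F, ‖iteratedFDeriv ℝ n (fun y => ξ (‖y‖ / R) ^ ℓ) x‖
      ≤ K * ξ (‖x‖ / R) ^ (ℓ - n) / R ^ n := by
  obtain ⟨K, hK0, hK⟩ := exists_norm_iteratedFDeriv_rpow_comp_inv_smul_le
    (contDiff_comp_norm (F := F) hξ hone) (hasCompactSupport_comp_norm hzero) (fun _ => hξ01 _)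
    hnℓ hℓ
  refine ⟨K, hK0, fun R hR x => ?_⟩
  simpa only [norm_div_eq_norm_inv_smul hR] using hK R hR x

end Radial

section Laplacian

variable {N : ℕ}

theorem contDiff_lapl {k : ℕ} {f : E N → ℝ} (hf : ContDiff ℝ (k + 2) f) :
    ContDiff ℝ k (lapl f) :=
  ContDiff.sum fun _ _ =>
    ((hf.fderiv_right le_rfl).clm_apply contDiff_const |>.fderiv_right le_rfl).clm_apply
      contDiff_const

theorem norm_iteratedFDeriv_lapl_le {k : ℕ} {f : E N → ℝ} (hf : ContDiff ℝ (k + 2) f) (x : E N) :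
    ‖iteratedFDeriv ℝ k (lapl f) x‖ ≤ N * ‖iteratedFDeriv ℝ (k + 2) f x‖ := by
  have hpartial : ∀ i : Fin N,
      ContDiff ℝ (k + 1) (fun y => fderiv ℝ f y (EuclideanSpace.single i 1)) := fun i =>
    (hf.fderiv_right le_rfl).clm_apply contDiff_const
  have hterm : ∀ i : Fin N, ‖iteratedFDeriv ℝ k (fun z => fderiv ℝ
      (fun y => fderiv ℝ f y (EuclideanSpace.single i 1)) z (EuclideanSpace.single i 1)) x‖
        ≤ ‖iteratedFDeriv ℝ (k + 2) f x‖ := fun i => by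
    have he : ‖(EuclideanSpace.single i 1 : E N)‖ = 1 := by simp
    calc _ ≤ ‖(EuclideanSpace.single i 1 : E N)‖ * ‖iteratedFDeriv ℝ (k + 1)
          (fun y => fderiv ℝ f y (EuclideanSpace.single i 1)) x‖ :=
          norm_iteratedFDeriv_fderiv_apply_le (hpartial i) _ x
      _ ≤ ‖(EuclideanSpace.single i 1 : E N)‖ * (‖(EuclideanSpace.single i 1 : E N)‖ *
          ‖iteratedFDeriv ℝ (k + 2) f x‖) := by
          gcongr; exact norm_iteratedFDeriv_fderiv_apply_le hf _ x
      _ = _ := by rw [he, one_mul, one_mul]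
  unfold lapl
  rw [iteratedFDeriv_fun_sum_apply fun i _ =>
    (((hpartial i).fderiv_right le_rfl).clm_apply contDiff_const).contDiffAt]
  calc _ ≤ ∑ i : Fin N, ‖iteratedFDeriv ℝ k (fun z => fderiv ℝ
        (fun y => fderiv ℝ f y (EuclideanSpace.single i 1)) z (EuclideanSpace.single i 1)) x‖ :=
        norm_sum_le _ _
    _ ≤ ∑ _i : Fin N, ‖iteratedFDeriv ℝ (k + 2) f x‖ := Finset.sum_le_sum fun i _ => hterm i
    _ = N * ‖iteratedFDeriv ℝ (k + 2) f x‖ := by simp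

theorem abs_bilapl_const_mul_le {g : E N → ℝ} (hg : ContDiff ℝ 4 g) (c : ℝ) (x : E N) :
    |bilapl (fun y => c * g y) x| ≤ N ^ 2 * |c| * ‖iteratedFDeriv ℝ 4 g x‖ := by
  have hcg : ContDiff ℝ 4 (fun y => c * g y) := contDiff_const.mul hg
  calc |bilapl (fun y => c * g y) x|
        = ‖iteratedFDeriv ℝ 0 (lapl (lapl (fun y => c * g y))) x‖ := by
        rw [norm_iteratedFDeriv_zero, Real.norm_eq_abs, bilapl]
    _ ≤ N * ‖iteratedFDeriv ℝ 2 (lapl (fun y => c * g y)) x‖ :=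
        norm_iteratedFDeriv_lapl_le (contDiff_lapl hcg) x
    _ ≤ N * (N * ‖iteratedFDeriv ℝ 4 (fun y => c * g y) x‖) := by
        gcongr; exact norm_iteratedFDeriv_lapl_le hcg x
    _ = N ^ 2 * |c| * ‖iteratedFDeriv ℝ 4 g x‖ := by
        rw [show (fun y => c * g y) = c • g from rfl, iteratedFDeriv_const_smul_apply hg.contDiffAt,
          norm_smul, Real.norm_eq_abs]
        ring

end Laplacian

theorem exists_abs_bilapl_const_mul_radial_cutoff_le {N : ℕ} {ξ : ℝ → ℝ} {ℓ : ℝ}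
    (hξ : ContDiff ℝ 4 ξ) (hξ01 : ∀ s, ξ s ∈ Icc (0 : ℝ) 1)
    (hone : ∀ s, 0 ≤ s → s ≤ 1 → ξ s = 1) (hzero : ∀ s, 2 ≤ s → ξ s = 0) (hℓ : 4 ≤ ℓ) :
    ∃ K > 0, ∀ R > 0, ∀ (a : ℝ) (x : E N),
      |bilapl (fun y => a * ξ (‖y‖ / R) ^ ℓ) x|
        ≤ N ^ 2 * K / R ^ 4 * |a| * ξ (‖x‖ / R) ^ (ℓ - 4) := by
  have hℓ' : ((4 : ℕ) : ℝ) ≤ ℓ := mod_cast hℓ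
  obtain ⟨K, hK0, hK⟩ := exists_norm_iteratedFDeriv_radial_cutoff_rpow_le (F := E N)
    hξ hξ01 hone hzero hℓ' (by linarith)
  refine ⟨K, hK0, fun R hR a x => ?_⟩
  calc _ ≤ N ^ 2 * |a| * ‖iteratedFDeriv ℝ 4 (fun y => ξ (‖y‖ / R) ^ ℓ) x‖ :=
        abs_bilapl_const_mul_le (contDiff_radial_cutoff_rpow hξ hone hℓ' hR) a x
    _ ≤ N ^ 2 * |a| * (K * ξ (‖x‖ / R) ^ (ℓ - 4) / R ^ 4) := by
        gcongr; exact_mod_cast hK R hR x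
    _ = _ := by ring

theorem ite_rpow_neg_mul_abs_rpow_mem_Icc {a b X M p ℓ : ℝ} (hp : 1 < p)
    (hℓ : 4 * (p / (p - 1)) ≤ ℓ) (ha : a ∈ Icc (0 : ℝ) 1) (hb : b ∈ Icc (0 : ℝ) 1) (hM : 0 ≤ M)
    (hX : |X| ≤ M * a ^ ℓ * b ^ (ℓ - 4)) :
    (if a ^ ℓ * b ^ ℓ = 0 then 0
      else (a ^ ℓ * b ^ ℓ) ^ (-(1 / (p - 1))) * |X| ^ (p / (p - 1)))
      ∈ Icc 0 (M ^ (p / (p - 1))) := by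
  set q := p / (p - 1)
  have hq : 1 < q := (one_lt_div (by linarith)).2 (by linarith)
  have hqc : 1 / (p - 1) = q - 1 := by
    have : p - 1 ≠ 0 := by linarith
    simp only [q]; field_simp; ring
  split_ifs with hab
  · exact ⟨le_rfl, by positivity⟩
  have ha0 : 0 < a := ha.1.lt_of_ne (by rintro rfl; simp [zero_rpow (by linarith : ℓ ≠ 0)] at hab)
  have hb0 : 0 < b := hb.1.lt_of_ne (by rintro rfl; simp [zero_rpow (by linarith : ℓ ≠ 0)] at hab)
  refine ⟨by positivity, ?_⟩
  set s := a * b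
  have hs0 : 0 < s := mul_pos ha0 hb0
  have hs1 : s ≤ 1 := mul_le_one₀ ha.2 hb.1 hb.2
  have hXs : |X| ≤ M * s ^ (ℓ - 4) :=
    calc |X| ≤ M * a ^ ℓ * b ^ (ℓ - 4) := hX
      _ ≤ M * a ^ (ℓ - 4) * b ^ (ℓ - 4) := by
          have := rpow_le_rpow_of_exponent_ge ha0 ha.2 (by linarith : ℓ - 4 ≤ ℓ)
          gcongr
      _ = M * s ^ (ℓ - 4) := by rw [mul_rpow ha0.le hb0.le, mul_assoc]
  rw [← mul_rpow ha0.le hb0.le, hqc]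
  calc (s ^ ℓ) ^ (-(q - 1)) * |X| ^ q ≤ (s ^ ℓ) ^ (-(q - 1)) * (M * s ^ (ℓ - 4)) ^ q := by
        gcongr
    _ = M ^ q * s ^ (ℓ - 4 * q) := by
        rw [mul_rpow hM (rpow_nonneg hs0.le _), ← rpow_mul hs0.le, ← rpow_mul hs0.le,
          mul_left_comm, ← rpow_add hs0]
        ring_nf
    _ ≤ M ^ q * 1 := by gcongr; exact rpow_le_one hs0.le hs1 (by linarith)
    _ = M ^ q := mul_one _

theorem measureReal_closedBall_prod_Icc {N : ℕ} {r T : ℝ} (hr : 0 ≤ r) (hT : 0 ≤ T) :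
    volume.real (Metric.closedBall (0 : E N) r ×ˢ Icc 0 T)
      = r ^ N * volume.real (Metric.ball (0 : E N) 1) * T := by
  rw [measureReal_def, Measure.volume_eq_prod, Measure.prod_prod, ENNReal.toReal_mul,
    ← measureReal_def, ← measureReal_def, Measure.addHaar_real_closedBall _ _ hr,
    finrank_euclideanSpace_fin, Real.volume_real_Icc_of_le hT, sub_zero]

theorem setIntegral_le_mul_measureReal {X : Type*} [MeasurableSpace X] {μ : Measure X}
    {s t : Set X} {f : X → ℝ} {M : ℝ} (hs : MeasurableSet s) (ht : μ t ≠ ⊤) (hM : 0 ≤ M)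
    (hf : ∀ x ∈ s, f x ∈ Icc 0 M) (hft : ∀ x ∈ s, x ∉ t → f x = 0) :
    ∫ x in s, f x ∂μ ≤ M * μ.real t := by
  rw [setIntegral_eq_of_subset_of_forall_sdiff_eq_zero hs inter_subset_left
    fun x hx => hft x hx.1 fun hxt => hx.2 ⟨hx.1, hxt⟩]
  calc ∫ x in s ∩ t, f x ∂μ ≤ ‖∫ x in s ∩ t, f x ∂μ‖ := Real.le_norm_self _
    _ ≤ M * μ.real (s ∩ t) := norm_setIntegral_le_of_norm_le_const
        ((measure_mono inter_subset_right).trans_lt ht.lt_top) fun x hx => by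
          rw [Real.norm_of_nonneg (hf x hx.1).1]; exact (hf x hx.1).2
    _ ≤ M * μ.real t := by gcongr; exact inter_subset_right

theorem test_function_bilaplacian_integral_estimate_general
    (N : ℕ) (hN : 2 ≤ N) (p : ℝ) (hp : 1 < p) (ℓ : ℝ) (hℓ : 4 * (p / (p - 1)) ≤ ℓ)
    (ζ : ℝ → ℝ)
    (hζ_range : ∀ s, ζ s ∈ Icc (0 : ℝ) 1)
    (ξ : ℝ → ℝ)
    (hξ_smooth : ContDiff ℝ (⊤ : ℕ∞) ξ)
    (hξ_range : ∀ s, ξ s ∈ Icc (0 : ℝ) 1)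
    (hξ_one : ∀ s : ℝ, 0 ≤ s → s ≤ 1 → ξ s = 1)
    (hξ_zero : ∀ s : ℝ, 2 ≤ s → ξ s = 0) :
    ∃ C > (0 : ℝ), ∀ T : ℝ, 0 < T → ∀ R : ℝ, 1 < R →
      (∫ q in (Dc N) ×ˢ Icc (0 : ℝ) T,
          if ζ (q.2 / T) ^ ℓ * ξ (‖q.1‖ / R) ^ ℓ = 0 then 0
          else (ζ (q.2 / T) ^ ℓ * ξ (‖q.1‖ / R) ^ ℓ) ^ (-(1 / (p - 1)))
            * |bilapl (fun y : E N => ζ (q.2 / T) ^ ℓ * ξ (‖y‖ / R) ^ ℓ) q.1| ^ (p / (p - 1)))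
        ≤ C * T * R ^ ((N : ℝ) - 4 * (p / (p - 1))) := by
  have hq : 1 < p / (p - 1) := (one_lt_div (by linarith)).2 (by linarith)
  obtain ⟨K, hK0, hK⟩ := exists_abs_bilapl_const_mul_radial_cutoff_le (N := N)
    (hξ_smooth.of_le (WithTop.coe_le_coe.2 le_top)) hξ_range hξ_one hξ_zero (by linarith)
  have hN0 : (0 : ℝ) < N := mod_cast (by omega : 0 < N)
  have hball : 0 < volume.real (Metric.ball (0 : E N) 1) :=
    ENNReal.toReal_pos (Metric.measure_ball_pos _ _ one_pos).ne' measure_ball_lt_top.ne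
  refine ⟨(N ^ 2 * K) ^ (p / (p - 1)) * 2 ^ N * volume.real (Metric.ball (0 : E N) 1),
    by positivity, fun T hT R hR => ?_⟩
  have hR0 : 0 < R := by linarith
  refine (setIntegral_le_mul_measureReal (M := (N ^ 2 * K / R ^ 4) ^ (p / (p - 1)))
    (t := Metric.closedBall (0 : E N) (2 * R) ×ˢ Icc 0 T)
    ((isOpen_lt continuous_const continuous_norm).measurableSet.prod measurableSet_Icc)
    ((isCompact_closedBall _ _).prod isCompact_Icc).measure_lt_top.ne (by positivity)
    ?bound ?vanish).trans_eq ?volume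
  case bound =>
    refine fun z _ => ite_rpow_neg_mul_abs_rpow_mem_Icc hp hℓ (hζ_range _) (hξ_range _)
      (by positivity) ?_
    simpa only [abs_of_nonneg (rpow_nonneg (hζ_range (z.2 / T)).1 ℓ)]
      using hK R hR0 (ζ (z.2 / T) ^ ℓ) z.1
  case vanish =>
    intro z hz hzt
    have hx : 2 * R < ‖z.1‖ := by simpa [hz.2] using hzt
    rw [if_pos (by rw [hξ_zero _ ((le_div_iff₀ hR0).2 hx.le), zero_rpow (by linarith), mul_zero])]
  case volume =>
    rw [measureReal_closedBall_prod_Icc (by linarith) hT.le,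
      div_rpow (by positivity) (by positivity), rpow_sub hR0, rpow_natCast, ← rpow_natCast R 4,
      ← rpow_mul hR0.le]
    push_cast
    field_simp
    ring

/-- with `φ₃(x,t) = ζ(t/T)^ℓ ξ(|x|/R)^ℓ`, the integral
`∫_Q φ₃^{−1/(p−1)} |Δ²_x φ₃|^{p'} dx dt` is bounded by `C T R^{N−4p'}`, where the
integrand is interpreted as `0` where `φ₃` vanishes. -/
theorem test_function_bilaplacian_integral_estimate
    (N : ℕ) (hN : 2 ≤ N) (p : ℝ) (hp : 1 < p) (ℓ : ℝ) (hℓ : 4 * (p / (p - 1)) ≤ ℓ)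
    (ζ : ℝ → ℝ)
    (hζ_smooth : ContDiff ℝ (⊤ : ℕ∞) ζ)
    (hζ_range : ∀ s, ζ s ∈ Icc (0 : ℝ) 1)
    (hζ_one : ∀ s : ℝ, 0 ≤ s → s ≤ 1 / 2 → ζ s = 1)
    (hζ_zero : ∀ s : ℝ, 1 ≤ s → ζ s = 0)
    (ξ : ℝ → ℝ)
    (hξ_smooth : ContDiff ℝ (⊤ : ℕ∞) ξ)
    (hξ_range : ∀ s, ξ s ∈ Icc (0 : ℝ) 1)
    (hξ_one : ∀ s : ℝ, 0 ≤ s → s ≤ 1 → ξ s = 1)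
    (hξ_zero : ∀ s : ℝ, 2 ≤ s → ξ s = 0)
    (hξ_bdd : ∀ k : ℕ, 1 ≤ k → k ≤ 4 → ∃ C : ℝ, ∀ s, |iteratedDeriv k ξ s| ≤ C) :
    ∃ C > (0 : ℝ), ∀ T : ℝ, 0 < T → ∀ R : ℝ, 1 < R →
      (∫ q in (Dc N) ×ˢ Icc (0 : ℝ) T,
          if ζ (q.2 / T) ^ ℓ * ξ (‖q.1‖ / R) ^ ℓ = 0 then 0
          else (ζ (q.2 / T) ^ ℓ * ξ (‖q.1‖ / R) ^ ℓ) ^ (-(1 / (p - 1)))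
            * |bilapl (fun y : E N => ζ (q.2 / T) ^ ℓ * ξ (‖y‖ / R) ^ ℓ) q.1| ^ (p / (p - 1)))
        ≤ C * T * R ^ ((N : ℝ) - 4 * (p / (p - 1))) :=
  test_function_bilaplacian_integral_estimate_general N hN p hp ℓ hℓ ζ hζ_range ξ hξ_smooth hξ_range
    hξ_one hξ_zero
end
end
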